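/- For all real numbers x and y with |y| < π/2, the modulus of log(1 + e^{-π sinh(x+iy)}) is at most log(1 + e^{-π sinh(x) cos y}) / (cos((π/2) sin y) · cos y). -/

import Mathlib

/-!
Put `u t = 1 + exp (-π sinh (t + y i))`. Then `u' = g u` with
`g t = -π cosh (t + y i) / (1 + exp (π sinh (t + y i)))` and `u → 1` at `+∞`, so
`u x = exp (-∫ₓ^∞ g)`; the principal logarithm is the logarithm of least modulus, hence
`‖log (u x)‖ ≤ ∫ₓ^∞ ‖g‖`.

To bound `‖g‖`, write `z = (π / 2) sinh (t + y i)`. Then `1 + exp (2z) = 2 exp z cosh z` and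
`‖cosh z‖² = cosh² (re z) - sin² (im z)`, so the inequality
`|sin ((π / 2) sin y cosh t)| ≤ |sin ((π / 2) sin y)| cosh ((π / 2) cos y sinh t)` yields
`‖1 + exp (π sinh (t + y i))‖ ≥ cos ((π / 2) sin y) (1 + exp (π sinh t cos y))`. With
`‖cosh (t + y i)‖ ≤ cosh t`, `‖g‖` is dominated by an explicit real function whose integral over
`(x, ∞)` is the right-hand side.
-/

open Complex Real Set MeasureTheory Filter Topology

namespace Real

lemma mul_cos_pi_div_two_mul_le {σ : ℝ} (h0 : 0 ≤ σ) (h1 : σ ≤ 1) :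
    σ * cos (π / 2 * σ) ≤ sin (π / 2 * σ) * (π / 2 * (1 - σ ^ 2)) := by
  have hπ := pi_pos
  have hsin : σ ≤ sin (π / 2 * σ) := by
    have := mul_le_sin (x := π / 2 * σ) (by positivity) (by nlinarith)
    rwa [← mul_assoc, div_mul_div_cancel₀ hπ.ne', div_self two_ne_zero, one_mul] at this
  have hcos : cos (π / 2 * σ) ≤ π / 2 * (1 - σ) := by
    rw [← sin_pi_div_two_sub]
    exact (sin_le (by nlinarith)).trans_eq (by ring)
  have hlen : 0 ≤ π / 2 * (1 - σ) := by nlinarith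
  calc σ * cos (π / 2 * σ) ≤ σ * (π / 2 * (1 - σ)) := mul_le_mul_of_nonneg_left hcos h0
    _ ≤ sin (π / 2 * σ) * (π / 2 * (1 - σ)) := mul_le_mul_of_nonneg_right hsin hlen
    _ ≤ sin (π / 2 * σ) * (π / 2 * (1 - σ) * (1 + σ)) :=
      mul_le_mul_of_nonneg_left (le_mul_of_one_le_right hlen (by linarith)) (h0.trans hsin)
    _ = sin (π / 2 * σ) * (π / 2 * (1 - σ ^ 2)) := by ring

lemma one_add_sq_div_two_le_cosh (a : ℝ) : 1 + a ^ 2 / 2 ≤ cosh a := by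
  have hsinh : (a / 2) ^ 2 ≤ sinh (a / 2) ^ 2 :=
    sq_le_sq.mpr <| by rw [abs_sinh]; exact self_le_sinh_iff.mpr (abs_nonneg _)
  have hcosh : cosh a = 1 + 2 * sinh (a / 2) ^ 2 := by
    have h := cosh_two_mul (a / 2)
    rw [mul_div_cancel₀ a two_ne_zero, cosh_sq'] at h
    linarith
  linarith

/-- Expand `sin` to first order around `π σ / 2`, then use `mul_cos_pi_div_two_mul_le` and
`1 + u² / 2 ≤ cosh u`. -/
lemma abs_sin_mul_cosh_le {σ τ : ℝ} (h0 : 0 ≤ σ) (h1 : σ ≤ 1) (hστ : σ ^ 2 + τ ^ 2 = 1) (t : ℝ) :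
    |sin (π / 2 * (σ * cosh t))| ≤ sin (π / 2 * σ) * cosh (π / 2 * (τ * sinh t)) := by
  set A := π / 2 with hA_def
  have hA : 0 < A := by positivity
  have hAσ : A * σ ≤ A := mul_le_of_le_one_right hA.le h1
  have hr : 1 ≤ cosh t := one_le_cosh t
  have hsin : 0 ≤ sin (A * σ) := sin_nonneg_of_nonneg_of_le_pi (by positivity) (by linarith)
  have hcos : 0 ≤ cos (A * σ) := cos_nonneg_of_mem_Icc ⟨by nlinarith, hAσ⟩
  have hδ : 0 ≤ A * σ * (cosh t - 1) := by have := mul_nonneg hA.le h0; nlinarith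
  have hfirst :
      |sin (A * (σ * cosh t))| ≤ sin (A * σ) + cos (A * σ) * (A * σ * (cosh t - 1)) := by
    rw [show A * (σ * cosh t) = A * σ + A * σ * (cosh t - 1) by ring, sin_add]
    refine (abs_add_le _ _).trans ?_
    rw [abs_mul, abs_mul, abs_of_nonneg hsin, abs_of_nonneg hcos]
    gcongr
    · exact mul_le_of_le_one_right hsin (abs_cos_le_one _)
    · exact abs_sin_le_abs.trans_eq (abs_of_nonneg hδ)
  have hsecond : cos (A * σ) * (A * σ * (cosh t - 1)) ≤
      sin (A * σ) * ((A * (τ * sinh t)) ^ 2 / 2) := by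
    have hBS : σ * cos (A * σ) ≤ sin (A * σ) * (A * τ ^ 2) := by
      simpa [show 1 - σ ^ 2 = τ ^ 2 by linarith] using mul_cos_pi_div_two_mul_le h0 h1
    rw [show (A * (τ * sinh t)) ^ 2 / 2 = A * τ ^ 2 * (A * (cosh t ^ 2 - 1) / 2) by
      rw [← sinh_sq]; ring]
    calc cos (A * σ) * (A * σ * (cosh t - 1)) = σ * cos (A * σ) * (A * (cosh t - 1)) := by ring
      _ ≤ sin (A * σ) * (A * τ ^ 2) * (A * (cosh t - 1)) := by gcongr
      _ ≤ sin (A * σ) * (A * τ ^ 2 * (A * (cosh t ^ 2 - 1) / 2)) := by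
        rw [mul_assoc]
        gcongr
        nlinarith [mul_nonneg hA.le (sq_nonneg (cosh t - 1))]
  have hcosh := one_add_sq_div_two_le_cosh (A * (τ * sinh t))
  nlinarith

lemma sin_sq_mul_cosh_le (y t : ℝ) :
    sin (π / 2 * (sin y * cosh t)) ^ 2 ≤
      sin (π / 2 * sin y) ^ 2 * cosh (π / 2 * (cos y * sinh t)) ^ 2 := by
  have h := abs_sin_mul_cosh_le (τ := cos y) (abs_nonneg (sin y)) (abs_sin_le_one y)
    (by rw [sq_abs, sin_sq_add_cos_sq]) t
  have hsq := pow_le_pow_left₀ (abs_nonneg _) h 2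
  rw [sq_abs, mul_pow] at hsq
  rcases abs_choice (sin y) with hs | hs <;> simpa [hs] using hsq

lemma cos_pi_div_two_mul_sin_pos {y : ℝ} (hy : |y| < π / 2) : 0 < cos (π / 2 * sin y) := by
  have hcos : 0 < cos y := cos_pos_of_mem_Ioo (abs_lt.mp hy)
  have hsin : |sin y| < 1 := by
    rw [← sq_lt_one_iff_abs_lt_one, sin_sq]
    nlinarith
  obtain ⟨hl, hr⟩ := abs_lt.mp hsin
  exact cos_pos_of_mem_Ioo ⟨by nlinarith [pi_pos], by nlinarith [pi_pos]⟩

lemma one_add_exp_two_mul (a : ℝ) : 1 + exp (2 * a) = 2 * exp a * cosh a := by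
  rw [cosh_eq, two_mul, exp_add, exp_neg]
  field_simp
  ring

lemma tendsto_exp_neg_mul_sinh_atTop {a : ℝ} (ha : 0 < a) :
    Tendsto (fun t ↦ exp (-(a * sinh t))) atTop (𝓝 0) :=
  tendsto_exp_atBot.comp <| tendsto_neg_atTop_atBot.comp <|
    sinhOrderIso.tendsto_atTop.const_mul_atTop ha

section ImproperIntegral

variable {a : ℝ}

lemma hasDerivAt_log_one_add_exp_neg_mul_sinh (a t : ℝ) :
    HasDerivAt (fun t ↦ log (1 + exp (-(a * sinh t))))
      (-(a * cosh t / (1 + exp (a * sinh t)))) t := by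
  have h := ((((hasDerivAt_sinh t).const_mul a).neg.exp).const_add 1).log (by positivity)
  refine h.congr_deriv ?_
  simp only [Pi.neg_apply, exp_neg]
  field_simp
  ring

lemma tendsto_log_one_add_exp_neg_mul_sinh_atTop (ha : 0 < a) :
    Tendsto (fun t ↦ log (1 + exp (-(a * sinh t)))) atTop (𝓝 0) := by
  simpa using ((tendsto_exp_neg_mul_sinh_atTop ha).const_add 1).log (by norm_num)

lemma integrableOn_Ioi_mul_cosh_div_one_add_exp_mul_sinh (ha : 0 < a) (x : ℝ) :
    IntegrableOn (fun t ↦ a * cosh t / (1 + exp (a * sinh t))) (Ioi x) := by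
  have h := integrableOn_Ioi_deriv_of_nonneg' (a := x)
    (fun t _ ↦ (hasDerivAt_log_one_add_exp_neg_mul_sinh a t).neg)
    (fun t _ ↦ by simp only [neg_neg]; have := cosh_pos t; positivity)
    (tendsto_log_one_add_exp_neg_mul_sinh_atTop ha).neg
  simpa using h

lemma integral_Ioi_mul_cosh_div_one_add_exp_mul_sinh (ha : 0 < a) (x : ℝ) :
    ∫ t in Ioi x, a * cosh t / (1 + exp (a * sinh t)) = log (1 + exp (-(a * sinh x))) := by
  have h := integral_Ioi_of_hasDerivAt_of_tendsto' (a := x)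
    (fun t _ ↦ (hasDerivAt_log_one_add_exp_neg_mul_sinh a t).neg)
    (by simpa using integrableOn_Ioi_mul_cosh_div_one_add_exp_mul_sinh ha x)
    (tendsto_log_one_add_exp_neg_mul_sinh_atTop ha).neg
  simpa using h

end ImproperIntegral

end Real

lemma abs_le_abs_add_int_mul_two_pi {a : ℝ} (ha : |a| ≤ π) (n : ℤ) :
    |a| ≤ |a + n * (2 * π)| := by
  rcases eq_or_ne n 0 with rfl | hn
  · simp
  have hn : (1 : ℝ) ≤ |(n : ℝ)| := by exact_mod_cast Int.one_le_abs hn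
  have h := abs_add_le (a + n * (2 * π)) (-a)
  rw [add_neg_cancel_comm, abs_neg, abs_mul, abs_of_pos (by positivity : 0 < 2 * π)] at h
  nlinarith [pi_pos]

namespace Complex

lemma sinh_ofReal_add_mul_I (t y : ℝ) :
    sinh (t + y * I) = (Real.sinh t * Real.cos y : ℝ) + (Real.cosh t * Real.sin y : ℝ) * I := by
  rw [sinh_add, sinh_mul_I, cosh_mul_I]
  push_cast
  ring

lemma sq_norm_cosh (z : ℂ) : ‖cosh z‖ ^ 2 = Real.cosh z.re ^ 2 - Real.sin z.im ^ 2 := by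
  have h : cosh z =
      (Real.cosh z.re * Real.cos z.im : ℝ) + (Real.sinh z.re * Real.sin z.im : ℝ) * I := by
    conv_lhs => rw [← re_add_im z]
    rw [cosh_add, cosh_mul_I, sinh_mul_I]
    push_cast
    ring
  rw [h, Complex.sq_norm, normSq_add_mul_I]
  linear_combination Real.cosh z.re ^ 2 * Real.sin_sq_add_cos_sq z.im +
    Real.sin z.im ^ 2 * Real.sinh_sq z.re

lemma norm_cosh_le (z : ℂ) : ‖cosh z‖ ≤ Real.cosh z.re := by
  have := sq_norm_cosh z
  nlinarith [sq_nonneg (Real.sin z.im), Real.cosh_pos z.re, norm_nonneg (cosh z)]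

lemma norm_one_add_exp_two_mul (z : ℂ) : ‖1 + exp (2 * z)‖ = 2 * Real.exp z.re * ‖cosh z‖ := by
  have h : 1 + exp (2 * z) = 2 * exp z * cosh z := by
    rw [cosh, two_mul, exp_add, exp_neg]; field_simp; ring
  rw [h, norm_mul, norm_mul, norm_exp]; norm_num

lemma norm_log_le_of_exp_eq {w z : ℂ} (h : exp w = z) : ‖log z‖ ≤ ‖w‖ := by
  obtain ⟨n, hn⟩ := exp_eq_exp_iff_exists_int.mp <| h.trans (exp_log (h ▸ exp_ne_zero w)).symm
  have hre : w.re = (log z).re := by simp [hn]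
  have him : w.im = (log z).im + n * (2 * π) := by simp [hn]
  have habs : |(log z).im| ≤ |w.im| := by
    rw [him, log_im]
    exact abs_le_abs_add_int_mul_two_pi (abs_arg_le_pi _) n
  rw [norm_eq_sqrt_sq_add_sq, norm_eq_sqrt_sq_add_sq, hre]
  exact Real.sqrt_le_sqrt (by linarith [sq_le_sq.mpr habs])

end Complex

/-- `u t * exp (-∫ₓᵗ g)` has derivative zero; this avoids choosing a branch of `log u`. -/
lemma eq_exp_neg_integral_Ioi_of_hasDerivAt {u g : ℝ → ℂ} {x : ℝ}
    (hu : ∀ t, HasDerivAt u (g t * u t) t) (hg : Continuous g) (hgi : IntegrableOn g (Ioi x))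
    (hlim : Tendsto u atTop (𝓝 1)) : u x = cexp (-∫ t in Ioi x, g t) := by
  set ψ := fun t ↦ u t * cexp (-∫ s in x..t, g s)
  have hψ (t : ℝ) : HasDerivAt ψ 0 t := by
    refine ((hu t).mul (hg.integral_hasStrictDerivAt x t).hasDerivAt.neg.cexp).congr_deriv ?_
    simp only [Pi.neg_apply]
    ring
  have hconst (t : ℝ) : ψ t = u x := by
    rw [is_const_of_deriv_eq_zero (fun s ↦ (hψ s).differentiableAt) (fun s ↦ (hψ s).deriv) t x]
    simp [ψ]
  have hψlim : Tendsto ψ atTop (𝓝 (1 * cexp (-∫ t in Ioi x, g t))) :=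
    hlim.mul ((Complex.continuous_exp.tendsto _).comp
      (intervalIntegral_tendsto_integral_Ioi x hgi tendsto_id).neg)
  rw [one_mul] at hψlim
  exact tendsto_nhds_unique (tendsto_const_nhds.congr fun t ↦ (hconst t).symm) hψlim

lemma cos_mul_one_add_exp_le_norm_one_add_exp (t y : ℝ) :
    Real.cos (π / 2 * Real.sin y) * (1 + Real.exp (π * (Real.sinh t * Real.cos y))) ≤
      ‖1 + cexp (π * sinh (t + y * I))‖ := by
  set z : ℂ := π / 2 * sinh (t + y * I)
  have hre : z.re = π / 2 * (Real.cos y * Real.sinh t) := by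
    simp [z, sinh_ofReal_add_mul_I, -ofReal_sinh, -ofReal_cosh, -ofReal_sin, -ofReal_cos]; ring
  have him : z.im = π / 2 * (Real.sin y * Real.cosh t) := by
    simp [z, sinh_ofReal_add_mul_I, -ofReal_sinh, -ofReal_cosh, -ofReal_sin, -ofReal_cos]; ring
  have hcosh : Real.cos (π / 2 * Real.sin y) * Real.cosh z.re ≤ ‖cosh z‖ := by
    refine (le_abs_self _).trans ((sq_le_sq.mp ?_).trans_eq (abs_norm _))
    rw [sq_norm_cosh, mul_pow, Real.cos_sq', him, hre]
    linarith [Real.sin_sq_mul_cosh_le y t]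
  rw [show (π : ℂ) * sinh (t + y * I) = 2 * z by ring, norm_one_add_exp_two_mul,
    show π * (Real.sinh t * Real.cos y) = 2 * z.re by rw [hre]; ring, Real.one_add_exp_two_mul]
  nlinarith [Real.exp_pos z.re]

section Strip

variable {y : ℝ}

lemma one_add_exp_pi_sinh_ne_zero (hc : 0 < Real.cos (π / 2 * Real.sin y)) (t : ℝ) :
    1 + cexp (π * sinh (t + y * I)) ≠ 0 :=
  norm_pos_iff.mp <| (mul_pos hc (by positivity)).trans_le
    (cos_mul_one_add_exp_le_norm_one_add_exp t y)

lemma norm_pi_cosh_div_one_add_exp_le (hc : 0 < Real.cos (π / 2 * Real.sin y)) (t : ℝ) :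
    ‖π * cosh (t + y * I) / (1 + cexp (π * sinh (t + y * I)))‖ ≤
      π * Real.cosh t /
        (Real.cos (π / 2 * Real.sin y) * (1 + Real.exp (π * (Real.sinh t * Real.cos y)))) := by
  rw [norm_div, norm_mul, norm_real, Real.norm_of_nonneg pi_pos.le]
  gcongr
  · simpa using norm_cosh_le (t + y * I)
  · exact cos_mul_one_add_exp_le_norm_one_add_exp t y

lemma hasDerivAt_one_add_exp_neg_pi_sinh (hc : 0 < Real.cos (π / 2 * Real.sin y)) (t : ℝ) :
    HasDerivAt (fun t : ℝ ↦ 1 + cexp (-(π * sinh (t + y * I))))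
      (-(π * cosh (t + y * I) / (1 + cexp (π * sinh (t + y * I)))) *
        (1 + cexp (-(π * sinh (t + y * I))))) t := by
  have h : HasDerivAt (fun z : ℂ ↦ 1 + cexp (-(π * sinh (z + y * I))))
      (cexp (-(π * sinh (t + y * I))) * -(π * cosh (t + y * I))) t :=
    ((((Complex.hasDerivAt_sinh _).comp_add_const _ _).const_mul _).neg.cexp).const_add 1
  convert h.comp_ofReal using 1
  have hne := one_add_exp_pi_sinh_ne_zero hc t
  rw [Complex.exp_neg]
  field_simp
  ring

lemma tendsto_one_add_exp_neg_pi_sinh (hy : 0 < Real.cos y) :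
    Tendsto (fun t : ℝ ↦ 1 + cexp (-(π * sinh (t + y * I)))) atTop (𝓝 1) := by
  rw [tendsto_iff_norm_sub_tendsto_zero]
  refine (Real.tendsto_exp_neg_mul_sinh_atTop (mul_pos pi_pos hy)).congr fun t ↦ ?_
  simp [norm_exp, sinh_ofReal_add_mul_I, -ofReal_sinh, -ofReal_cosh, -ofReal_sin, -ofReal_cos]
  ring

end Strip

theorem stmt_6 (x y : ℝ) (hy : |y| < Real.pi / 2) :
    ‖Complex.log (1 + Complex.exp (-(Real.pi * Complex.sinh (x + y * Complex.I))))‖ ≤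
      Real.log (1 + Real.exp (-(Real.pi * Real.sinh x * Real.cos y))) /
        (Real.cos (Real.pi / 2 * Real.sin y) * Real.cos y) := by
  have hcos : 0 < Real.cos y := Real.cos_pos_of_mem_Ioo (abs_lt.mp hy)
  have hc := Real.cos_pi_div_two_mul_sin_pos hy
  have ha : 0 < π * Real.cos y := mul_pos pi_pos hcos
  set C := Real.cos (π / 2 * Real.sin y) * Real.cos y
  set g : ℝ → ℂ := fun t ↦ -(π * cosh (t + y * I) / (1 + cexp (π * sinh (t + y * I))))
  set G : ℝ → ℝ := fun t ↦
    π * Real.cos y * Real.cosh t / (1 + Real.exp (π * Real.cos y * Real.sinh t))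
  have hg : Continuous g := by
    have := one_add_exp_pi_sinh_ne_zero hc
    fun_prop (disch := assumption)
  have hbound (t : ℝ) : ‖g t‖ ≤ C⁻¹ * G t := by
    refine (norm_neg _).trans_le ((norm_pi_cosh_div_one_add_exp_le hc t).trans_eq ?_)
    simp only [C, G]
    field_simp
  have hG := Real.integrableOn_Ioi_mul_cosh_div_one_add_exp_mul_sinh ha x
  have hgi : IntegrableOn g (Ioi x) :=
    (hG.const_mul C⁻¹).mono' hg.aestronglyMeasurable (ae_of_all _ hbound)
  have hu := eq_exp_neg_integral_Ioi_of_hasDerivAt (hasDerivAt_one_add_exp_neg_pi_sinh hc) hg hgi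
    (tendsto_one_add_exp_neg_pi_sinh hcos)
  calc _ ≤ ‖-∫ t in Ioi x, g t‖ := norm_log_le_of_exp_eq hu.symm
    _ ≤ ∫ t in Ioi x, C⁻¹ * G t := (norm_neg _).trans_le <|
        norm_integral_le_of_norm_le (hG.const_mul _) (ae_of_all _ hbound)
    _ = _ := by
      rw [integral_const_mul, Real.integral_Ioi_mul_cosh_div_one_add_exp_mul_sinh ha]
      ring_nf
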